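/- arXiv:2509.07720 — 3 statements merged into one kernel-verified Lean document; each statement's English description precedes it below -/
import Mathlib

section
/- Let X be an admissible A-module that is simple, let P be an admissible A-module that is projective as an A-module, and let φ : P → X be a covering surjection. Suppose Y is an admissible A-module such that for every admissible A-module M one has dim_ℂ Hom_A(P, M) = dim_ℂ Hom_A(Y, M). Then P and Y are isomorphic as A-modules. -/
/-!
Apply `Hom_A(-, ·)` to `0 → ker φ → P → X → 0`. For `P` the map `Hom_A(P, P) → Hom_A(P, X)` is
onto by projectivity, so by rank–nullity and the equality of `Hom`-dimensions at `P`, `ker φ`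
and `X`, also `Hom_A(Y, P) → Hom_A(Y, X)` is onto. A nonzero map `Y → X` (one exists because
`Hom_A(P, X) ∋ φ` is nonzero) is onto as `X` is simple; its lift `g : Y → P` is onto since `φ`
is a covering surjection. Then precomposition with `g` embeds `Hom_A(P, Y)` into `Hom_A(Y, Y)`,
a space of the same dimension, so `id_Y` factors through `g` and `g` is also injective.
-/

universe u v

section HomDimension

variable {k A : Type*} [Field k] [Ring A] [Algebra k A]
variable {M N Z : Type*}
  [AddCommGroup M] [Module k M] [Module A M] [IsScalarTower k A M]
  [AddCommGroup N] [Module k N] [Module A N] [IsScalarTower k A N]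
  [AddCommGroup Z] [Module A Z]

instance FiniteDimensional.linearMap_of_isScalarTower [FiniteDimensional k M]
    [FiniteDimensional k N] : FiniteDimensional k (M →ₗ[A] N) :=
  .of_injective (LinearMap.restrictScalarsₗ k A M N k) (LinearMap.restrictScalars_injective k)

instance FiniteDimensional.submodule_of_isScalarTower [FiniteDimensional k M]
    (p : Submodule A M) : FiniteDimensional k p :=
  FiniteDimensional.finiteDimensional_submodule (p.restrictScalars k)

namespace LinearMap

open Module

theorem ker_compRight_eq_range (φ : M →ₗ[A] N) :
    ker (compRight k φ : (Z →ₗ[A] M) →ₗ[k] _) = range (compRight k (ker φ).subtype) := by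
  ext f
  constructor
  · intro hf
    exact ⟨f.codRestrict _ fun z ↦ LinearMap.congr_fun hf z, rfl⟩
  · rintro ⟨f, rfl⟩
    ext z
    exact (f z).2

theorem finrank_range_compRight_add_finrank_linearMap_ker [Module k Z] [IsScalarTower k A Z]
    [FiniteDimensional k Z] [FiniteDimensional k M] (φ : M →ₗ[A] N) :
    finrank k (range (compRight k φ : (Z →ₗ[A] M) →ₗ[k] _)) + finrank k (Z →ₗ[A] ker φ) =
      finrank k (Z →ₗ[A] M) := by
  have hinj : Function.Injective (compRight k (ker φ).subtype : (Z →ₗ[A] ker φ) →ₗ[k] _) :=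
    (ker φ).injective_subtype.injective_linearMapComp_left
  rw [← finrank_range_add_finrank_ker (compRight k φ), ker_compRight_eq_range,
    finrank_range_of_inj hinj]

theorem surjective_compRight_of_finrank_linearMap_eq {Y : Type*} [AddCommGroup Y]
    [Module k Y] [Module A Y] [IsScalarTower k A Y] [FiniteDimensional k Y]
    [FiniteDimensional k M] [FiniteDimensional k N] [Projective A M]
    {φ : M →ₗ[A] N} (hφ : Function.Surjective φ)
    (hM : finrank k (M →ₗ[A] M) = finrank k (Y →ₗ[A] M))
    (hK : finrank k (M →ₗ[A] ker φ) = finrank k (Y →ₗ[A] ker φ))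
    (hN : finrank k (M →ₗ[A] N) = finrank k (Y →ₗ[A] N)) :
    Function.Surjective (compRight k φ : (Y →ₗ[A] M) →ₗ[k] (Y →ₗ[A] N)) := by
  have hrange_M : range (compRight k φ : (M →ₗ[A] M) →ₗ[k] _) = ⊤ :=
    range_eq_top.mpr fun f ↦ projective_lifting_property φ f hφ
  have hM' := finrank_range_compRight_add_finrank_linearMap_ker (k := k) (Z := M) φ
  have hY' := finrank_range_compRight_add_finrank_linearMap_ker (k := k) (Z := Y) φ
  rw [hrange_M, finrank_top] at hM'
  rw [← range_eq_top]
  apply Submodule.eq_top_of_finrank_eq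
  omega

theorem injective_of_surjective_of_finrank_linearMap_eq {Y : Type*} [AddCommGroup Y]
    [Module k Y] [Module A Y] [IsScalarTower k A Y] [FiniteDimensional k Y]
    [FiniteDimensional k M] {g : Y →ₗ[A] M} (hg : Function.Surjective g)
    (h : finrank k (M →ₗ[A] Y) = finrank k (Y →ₗ[A] Y)) :
    Function.Injective g := by
  obtain ⟨r, hr⟩ := (injective_iff_surjective_of_finrank_eq_finrank h).mp
    (lcomp_injective_of_surjective (S := k) (N := Y) g hg) LinearMap.id
  exact Function.LeftInverse.injective (g := r) (LinearMap.congr_fun hr)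

end LinearMap

end HomDimension

/-- **Dimension criterion** (Proposition 2.1 of the paper, abstracted):
if `P` is a projective admissible `A`-module admitting a covering surjection onto a
simple admissible `A`-module `X`, and `Y` is an admissible `A`-module whose
`Hom`-space dimensions into every admissible `A`-module agree with those of `P`,
then `P ≃ Y` as `A`-modules. -/
theorem stmt_0 (A : Type u) [Ring A] [Algebra ℂ A]
    (X : Type v) [AddCommGroup X] [Module ℂ X] [Module A X] [IsScalarTower ℂ A X]
    [FiniteDimensional ℂ X]
    (P : Type v) [AddCommGroup P] [Module ℂ P] [Module A P] [IsScalarTower ℂ A P]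
    [FiniteDimensional ℂ P]
    (Y : Type v) [AddCommGroup Y] [Module ℂ Y] [Module A Y] [IsScalarTower ℂ A Y]
    [FiniteDimensional ℂ Y]
    (hX : IsSimpleModule A X)
    (hP : Module.Projective A P)
    (φ : P →ₗ[A] X) (hφ : Function.Surjective φ)
    (hcover : ∀ (M : Type v) [AddCommGroup M] [Module ℂ M] [Module A M]
      [IsScalarTower ℂ A M] [FiniteDimensional ℂ M] (f : M →ₗ[A] P),
      Function.Surjective (φ ∘ₗ f) → Function.Surjective f)
    (hdim : ∀ (M : Type v) [AddCommGroup M] [Module ℂ M] [Module A M]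
      [IsScalarTower ℂ A M] [FiniteDimensional ℂ M],
      Module.finrank ℂ (P →ₗ[A] M) = Module.finrank ℂ (Y →ₗ[A] M)) :
    Nonempty (P ≃ₗ[A] Y) := by
  have : Nontrivial X := IsSimpleModule.nontrivial A X
  obtain ⟨ψ, hψ⟩ : ∃ ψ : Y →ₗ[A] X, ψ ≠ 0 := Module.finrank_pos_iff_exists_ne_zero.mp <|
    hdim X ▸ Module.finrank_pos_iff_exists_ne_zero.mpr ⟨φ, LinearMap.ne_zero_of_surjective hφ⟩
  obtain ⟨g, rfl⟩ := LinearMap.surjective_compRight_of_finrank_linearMap_eq hφ (hdim P)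
    (hdim (LinearMap.ker φ)) (hdim X) ψ
  have hg_surj : Function.Surjective g := hcover Y g (LinearMap.surjective_of_ne_zero hψ)
  exact ⟨(LinearEquiv.ofBijective g
    ⟨LinearMap.injective_of_surjective_of_finrank_linearMap_eq hg_surj (hdim Y), hg_surj⟩).symm⟩
end

section
/- Let P and Y be admissible A-modules and β : P → Y a surjective A-linear map such that dim_ℂ Hom_A(Y, P) = dim_ℂ Hom_A(P, P). Then there exists an A-linear map γ : Y → P with γ ∘ β = id_P; consequently β is an isomorphism of A-modules. -/
universe u v

/-!
Precomposition with a surjection `β : P → Y` embeds `Hom_A(Y, P)` into `Hom_A(P, P)` as a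
`K`-linear map; equal finite dimensions make this embedding onto, so `id_P` is of the form
`γ ∘ β`, and a map with a left inverse is injective.
-/

open Module

variable {K A : Type*} [Field K] [Ring A] [Algebra K A]

theorem LinearMap.finiteDimensional_of_isScalarTower {M N : Type*}
    [AddCommGroup M] [Module K M] [Module A M] [IsScalarTower K A M] [FiniteDimensional K M]
    [AddCommGroup N] [Module K N] [Module A N] [IsScalarTower K A N] [FiniteDimensional K N] :
    FiniteDimensional K (M →ₗ[A] N) :=
  FiniteDimensional.of_injective (LinearMap.restrictScalarsₗ K A M N K)
    (LinearMap.restrictScalars_injective K)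

theorem LinearMap.exists_comp_eq_id_of_finrank_eq {M N : Type*}
    [AddCommGroup M] [Module K M] [Module A M] [IsScalarTower K A M] [FiniteDimensional K M]
    [AddCommGroup N] [Module A N] (β : M →ₗ[A] N) (hβ : Function.Surjective β)
    (hdim : finrank K (N →ₗ[A] M) = finrank K (M →ₗ[A] M)) :
    ∃ γ : N →ₗ[A] M, γ ∘ₗ β = LinearMap.id := by
  have : FiniteDimensional K (M →ₗ[A] M) := LinearMap.finiteDimensional_of_isScalarTower
  have hinj : Function.Injective (LinearMap.lcomp K M β) :=
    LinearMap.lcomp_injective_of_surjective β hβ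
  have : FiniteDimensional K (N →ₗ[A] M) := FiniteDimensional.of_injective _ hinj
  exact (LinearMap.injective_iff_surjective_of_finrank_eq_finrank hdim).mp hinj LinearMap.id

theorem stmt_7_general (A : Type u) [Ring A] [Algebra ℂ A]
    (P : Type v) [AddCommGroup P] [Module ℂ P] [Module A P] [IsScalarTower ℂ A P]
    [FiniteDimensional ℂ P]
    (Y : Type v) [AddCommGroup Y] [Module A Y]
    (β : P →ₗ[A] Y) (hβ : Function.Surjective β)
    (hdim : Module.finrank ℂ (Y →ₗ[A] P) = Module.finrank ℂ (P →ₗ[A] P)) :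
    (∃ γ : Y →ₗ[A] P, γ ∘ₗ β = LinearMap.id) ∧ Function.Bijective β := by
  obtain ⟨γ, hγ⟩ := β.exists_comp_eq_id_of_finrank_eq hβ hdim
  have hleft : Function.LeftInverse γ β := LinearMap.congr_fun hγ
  exact ⟨⟨γ, hγ⟩, hleft.injective, hβ⟩

/-- If `β : P → Y` is a surjective `A`-linear map between admissible `A`-modules and
`dim_ℂ Hom_A(Y, P) = dim_ℂ Hom_A(P, P)`, then `β` splits: there is `γ : Y → P` with
`γ ∘ β = id`; consequently `β` is an isomorphism. -/
theorem stmt_7 (A : Type u) [Ring A] [Algebra ℂ A]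
    (P : Type v) [AddCommGroup P] [Module ℂ P] [Module A P] [IsScalarTower ℂ A P]
    [FiniteDimensional ℂ P]
    (Y : Type v) [AddCommGroup Y] [Module ℂ Y] [Module A Y] [IsScalarTower ℂ A Y]
    [FiniteDimensional ℂ Y]
    (β : P →ₗ[A] Y) (hβ : Function.Surjective β)
    (hdim : Module.finrank ℂ (Y →ₗ[A] P) = Module.finrank ℂ (P →ₗ[A] P)) :
    (∃ γ : Y →ₗ[A] P, γ ∘ₗ β = LinearMap.id) ∧ Function.Bijective β :=
  stmt_7_general A P Y β hβ hdim
end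

section
/- Assume that the maximal generalized eigenspaces of L span V, i.e. the supremum over μ ∈ ℂ of the maximal generalized eigenspaces of L equals V. Let S be a set of ℂ-linear endomorphisms of V such that for every g ∈ S there exists c_g ∈ ℂ with L ∘ g − g ∘ L = c_g • g. Let Ω be the subspace ⋂_{g ∈ S} ker g of V. Then Ω = ⨆_{μ ∈ ℂ} (Ω ⊓ maxGenEigenspace(L, μ)); that is, for every w ∈ Ω, each component of w with respect to the generalized eigenspace decomposition of L again lies in Ω, so Ω is spanned by its intersections with the maximal generalized eigenspaces of L. -/
/-!
Since `g (L - μ) = (L - (μ + c)) g`, each `g ∈ S` maps the generalized `μ`-eigenspace of `L`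
into the generalized `(μ + c)`-eigenspace. Applying `g` to the decomposition `w = ∑ w_μ` of
some `w ∈ Ω` thus decomposes `0 = g w` along the independent family of generalized
eigenspaces, so every `g w_μ` vanishes.
-/

universe u

namespace Module.End

variable {R M : Type*} [CommRing R] [AddCommGroup M] [Module R M]

theorem apply_mem_maxGenEigenspace_add_of_commutator_eq_smul {L g : End R M} {c : R}
    (hc : L * g - g * L = c • g) {μ : R} {x : M} (hx : x ∈ L.maxGenEigenspace μ) :
    g x ∈ L.maxGenEigenspace (μ + c) := by
  have hsemiconj : SemiconjBy g (L - μ • 1) (L - (μ + c) • 1) := by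
    rw [sub_eq_iff_eq_add] at hc
    rw [SemiconjBy, mul_sub, sub_mul, hc, mul_smul_comm, smul_mul_assoc, mul_one, one_mul,
      add_smul]
    abel
  obtain ⟨k, hk⟩ := (mem_maxGenEigenspace _ _ _).mp hx
  refine (mem_maxGenEigenspace _ _ _).mpr ⟨k, ?_⟩
  rw [← mul_apply, ← (hsemiconj.pow_right k).eq, mul_apply, hk, map_zero]

variable [IsDomain R] [IsTorsionFree R M]

theorem apply_eq_zero_of_apply_sum_eq_zero {L g : End R M} {c : R}
    (hc : L * g - g * L = c • g) {s : Finset R} {v : R → M}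
    (hv : ∀ μ ∈ s, v μ ∈ L.maxGenEigenspace μ) (hg : g (∑ μ ∈ s, v μ) = 0) :
    ∀ μ ∈ s, g (v μ) = 0 := by
  have hindep : iSupIndep fun μ ↦ L.maxGenEigenspace (μ + c) :=
    L.independent_maxGenEigenspace.comp (add_left_injective c)
  rw [map_sum] at hg
  exact (iSupIndep_iff_finsetSum_eq_zero_imp_eq_zero _).mp hindep s (fun μ ↦ g (v μ))
    (fun μ hμ ↦ apply_mem_maxGenEigenspace_add_of_commutator_eq_smul hc (hv μ hμ)) hg

end Module.End

/-- Suppose the maximal generalized eigenspaces of `L` span `V`, and `S` is a set of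
endomorphisms each satisfying `[L, g] = c_g • g` for some `c_g ∈ ℂ`. Then the common
kernel `Ω = ⋂_{g ∈ S} ker g` is spanned by its intersections with the maximal
generalized eigenspaces of `L`. -/
theorem stmt_9 (V : Type u) [AddCommGroup V] [Module ℂ V] (L : Module.End ℂ V)
    (hspan : (⨆ μ : ℂ, L.maxGenEigenspace μ) = ⊤)
    (S : Set (Module.End ℂ V))
    (hS : ∀ g ∈ S, ∃ c : ℂ, L * g - g * L = c • g)
    (Ω : Submodule ℂ V) (hΩ : Ω = ⨅ g ∈ S, LinearMap.ker g) :
    Ω = ⨆ μ : ℂ, Ω ⊓ L.maxGenEigenspace μ := by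
  refine le_antisymm (fun w hw ↦ ?_) (iSup_le fun μ ↦ inf_le_left)
  obtain ⟨v, hv, rfl⟩ :=
    (Submodule.mem_iSup_iff_exists_finsupp _ _).mp (hspan ▸ Submodule.mem_top : w ∈ _)
  have hvΩ : ∀ μ ∈ v.support, v μ ∈ Ω := by
    subst hΩ
    simp only [Submodule.mem_iInf, LinearMap.mem_ker] at hw ⊢
    intro μ hμ g hgS
    obtain ⟨c, hc⟩ := hS g hgS
    exact Module.End.apply_eq_zero_of_apply_sum_eq_zero hc (fun μ _ ↦ hv μ) (hw g hgS) μ hμ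
  exact Submodule.sum_mem _ fun μ hμ ↦ Submodule.mem_iSup_of_mem μ ⟨hvΩ μ hμ, hv μ⟩
end
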